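/- Fix μ ∈ X and let X₁, X₂, X₃, … be independent random elements of X each with law P. For n ≥ 1 define the sample metric spatial depth D_n(μ) := 1 − (1/(2n²)) Σ_{i=1}^n Σ_{j=1}^n h(X_i, X_j, μ). Then √n·(D_n(μ) − D(μ; P)) is bounded in probability: for every ε > 0 there exists M > 0 such that for all n ≥ 1, P(|D_n(μ) − D(μ; P)| > M/√n) ≤ ε. -/

import Mathlib

open MeasureTheory
open scoped ProbabilityTheory
open scoped Classical

/-- The kernel `h` of the metric spatial depth. -/
noncomputable def mh {X : Type*} [MetricSpace X] (x₁ x₂ x₃ : X) : ℝ :=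
  if x₃ = x₁ ∨ x₃ = x₂ then 0
  else (dist x₁ x₃ ^ 2 + dist x₂ x₃ ^ 2 - dist x₁ x₂ ^ 2) / (dist x₁ x₃ * dist x₂ x₃)

/-- The metric spatial depth of `μ` with respect to the measure `P`. -/
noncomputable def msDepth {X : Type*} [MetricSpace X] [MeasurableSpace X]
    (μ : X) (P : Measure X) : ℝ :=
  1 - (1 / 2) * ∫ x₁, ∫ x₂, mh x₁ x₂ μ ∂P ∂P

/-! Put `m = ∫ h(x₁, x₂, μ) d(P ⊗ P)` and `T_n = ∑_{i,j<n} (h(X_i, X_j, μ) - m)`, so that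
`D_n(μ) - D(μ; P) = -T_n / (2n²)`. A summand with `k ≠ l` has mean zero and is independent of
every summand whose indices avoid `{k, l}`, so in `E[T_n²] = ∑ E[(h_{ij} - m)(h_{kl} - m)]` at most
`5n³` of the `n⁴` terms survive, each bounded by `16` since `|h| ≤ 2`. Chebyshev's inequality
applied to `E[T_n²] ≤ 80n³` bounds the probability in question by `20 / M²`. -/

open Finset ProbabilityTheory

section Kernel

variable {X : Type*} [MetricSpace X]

theorem abs_mh_le_two (x₁ x₂ y : X) : |mh x₁ x₂ y| ≤ 2 := by
  unfold mh
  split_ifs with h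
  · norm_num
  push Not at h
  have ha : 0 < dist x₁ y := dist_pos.mpr fun he => h.1 he.symm
  have hb : 0 < dist x₂ y := dist_pos.mpr fun he => h.2 he.symm
  have h₁ := dist_triangle_right x₁ x₂ y
  have h₂ := dist_triangle x₁ x₂ y
  have h₃ := dist_triangle_left x₂ y x₁
  rw [abs_div, abs_of_pos (mul_pos ha hb), div_le_iff₀ (mul_pos ha hb), abs_le]
  -- with `a, b, c` the three distances, `(a - b)² ≤ c² ≤ (a + b)²` by the triangle inequality
  constructor <;> nlinarith [dist_nonneg (x := x₁) (y := x₂), dist_comm x₁ x₂]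

/-- The sample metric spatial depth `D_n(y)` of the first `n` points of `x`. -/
noncomputable def sampleMsDepth (y : X) (x : ℕ → X) (n : ℕ) : ℝ :=
  1 - (1 / (2 * (n : ℝ) ^ 2)) * ∑ i ∈ range n, ∑ j ∈ range n, mh (x i) (x j) y

variable [MeasurableSpace X] [BorelSpace X] [SecondCountableTopology X]

theorem measurable_mh (y : X) : Measurable fun p : X × X => mh p.1 p.2 y := by
  have hd₁ : Measurable fun p : X × X => dist p.1 y :=
    (continuous_fst.dist continuous_const).measurable
  have hd₂ : Measurable fun p : X × X => dist p.2 y :=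
    (continuous_snd.dist continuous_const).measurable
  have hd : Measurable fun p : X × X => dist p.1 p.2 := continuous_dist.measurable
  refine Measurable.ite ?_ measurable_const
    ((((hd₁.pow_const 2).add (hd₂.pow_const 2)).sub (hd.pow_const 2)).div (hd₁.mul hd₂))
  exact (measurableSet_eq_fun measurable_const measurable_fst).union
    (measurableSet_eq_fun measurable_const measurable_snd)

theorem msDepth_eq_integral_prod (y : X) (P : Measure X) [IsFiniteMeasure P] :
    msDepth y P = 1 - (1 / 2) * ∫ p, mh p.1 p.2 y ∂(P.prod P) := by
  have hint : Integrable (fun p : X × X => mh p.1 p.2 y) (P.prod P) :=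
    .of_bound (measurable_mh y).aestronglyMeasurable 2
      (ae_of_all _ fun p => by simpa using abs_mh_le_two p.1 p.2 y)
  rw [msDepth, integral_prod _ hint]

theorem sampleMsDepth_sub_msDepth (y : X) (x : ℕ → X) (P : Measure X) [IsFiniteMeasure P]
    {n : ℕ} (hn : n ≠ 0) :
    sampleMsDepth y x n - msDepth y P =
      -(∑ i ∈ range n, ∑ j ∈ range n, (mh (x i) (x j) y - ∫ p, mh p.1 p.2 y ∂(P.prod P))) /
        (2 * n ^ 2) := by
  have hn' : (n : ℝ) ≠ 0 := Nat.cast_ne_zero.mpr hn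
  rw [sampleMsDepth, msDepth_eq_integral_prod]
  simp only [sum_sub_distrib, sum_const, card_range, nsmul_eq_mul]
  field_simp
  ring

end Kernel

section SecondMoment

variable {Ω : Type*} [MeasurableSpace Ω] {μ : Measure Ω}

theorem measure_lt_abs_le_integral_sq_div [IsFiniteMeasure μ] {T : Ω → ℝ}
    (hT : MemLp T 2 μ) {c : ℝ} (hc : 0 < c) :
    μ {ω | c < |T ω|} ≤ ENNReal.ofReal ((∫ ω, T ω ^ 2 ∂μ) / c ^ 2) := by
  have hsub : {ω | c < |T ω|} ⊆ {ω | c ^ 2 ≤ T ω ^ 2} := fun ω (hω : c < |T ω|) =>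
    show c ^ 2 ≤ T ω ^ 2 from sq_abs (T ω) ▸ pow_le_pow_left₀ hc.le hω.le 2
  have hmarkov := mul_meas_ge_le_integral_of_nonneg
    (Filter.Eventually.of_forall fun ω => sq_nonneg (T ω)) hT.integrable_sq (c ^ 2)
  calc μ {ω | c < |T ω|} ≤ μ {ω | c ^ 2 ≤ T ω ^ 2} := measure_mono hsub
    _ = ENNReal.ofReal (μ.real {ω | c ^ 2 ≤ T ω ^ 2}) :=
      (ofReal_measureReal (measure_ne_top _ _)).symm
    _ ≤ ENNReal.ofReal ((∫ ω, T ω ^ 2 ∂μ) / c ^ 2) :=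
      ENNReal.ofReal_le_ofReal ((le_div_iff₀ (by positivity)).2 (by linarith))

theorem integral_sq_sum_le_of_integral_mul_eq_zero [IsProbabilityMeasure μ] {ι : Type*}
    (s : Finset ι) {Y : ι → Ω → ℝ} {C : ℝ} (hY : ∀ a, AEStronglyMeasurable (Y a) μ)
    (hYC : ∀ a ω, |Y a ω| ≤ C) (R : ι → ι → Prop) [DecidableRel R]
    (hR : ∀ a b, ¬R a b → ∫ ω, Y a ω * Y b ω ∂μ = 0) :
    ∫ ω, (∑ a ∈ s, Y a ω) ^ 2 ∂μ ≤ C ^ 2 * (∑ a ∈ s, #{b ∈ s | R a b} : ℕ) := by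
  have hprod (a b : ι) : ∀ᵐ ω ∂μ, ‖Y a ω * Y b ω‖ ≤ C ^ 2 := ae_of_all _ fun ω => by
    rw [Real.norm_eq_abs, abs_mul, sq]
    exact mul_le_mul (hYC a ω) (hYC b ω) (abs_nonneg _) ((abs_nonneg _).trans (hYC a ω))
  have hint (a b : ι) : Integrable (fun ω => Y a ω * Y b ω) μ :=
    .of_bound ((hY a).mul (hY b)) _ (hprod a b)
  have hterm (a b : ι) : ∫ ω, Y a ω * Y b ω ∂μ ≤ if R a b then C ^ 2 else 0 := by
    split_ifs with h
    · simpa using (le_abs_self _).trans (norm_integral_le_of_norm_le_const (hprod a b))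
    · exact (hR a b h).le
  calc ∫ ω, (∑ a ∈ s, Y a ω) ^ 2 ∂μ
      = ∑ a ∈ s, ∑ b ∈ s, ∫ ω, Y a ω * Y b ω ∂μ := by
        simp_rw [sq, sum_mul_sum]
        rw [integral_finsetSum _ fun a _ => integrable_finsetSum _ fun b _ => hint a b]
        exact sum_congr rfl fun a _ => integral_finsetSum _ fun b _ => hint a b
    _ ≤ ∑ a ∈ s, ∑ b ∈ s, if R a b then C ^ 2 else 0 :=
        sum_le_sum fun a _ => sum_le_sum fun b _ => hterm a b
    _ = C ^ 2 * (∑ a ∈ s, #{b ∈ s | R a b} : ℕ) := by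
        simp [sum_ite, mul_sum, mul_comm]

end SecondMoment

theorem sum_card_filter_pair_meets_le {α : Type*} [DecidableEq α] (s : Finset α) :
    ∑ a ∈ s ×ˢ s, #{b ∈ s ×ˢ s | b.1 = b.2 ∨ b.1 = a.1 ∨ b.1 = a.2 ∨ b.2 = a.1 ∨ b.2 = a.2} ≤
      5 * #s ^ 3 := by
  have hcard (a : α × α) :
      #{b ∈ s ×ˢ s | b.1 = b.2 ∨ b.1 = a.1 ∨ b.1 = a.2 ∨ b.2 = a.1 ∨ b.2 = a.2} ≤ 5 * #s := by
    have hsub : {b ∈ s ×ˢ s | b.1 = b.2 ∨ b.1 = a.1 ∨ b.1 = a.2 ∨ b.2 = a.1 ∨ b.2 = a.2} ⊆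
        s.diag ∪ ({a.1, a.2} ×ˢ s ∪ s ×ˢ {a.1, a.2}) := by
      intro b hb
      simp only [mem_filter, mem_product] at hb
      simp only [mem_union, mem_diag, mem_product, mem_insert, mem_singleton]
      tauto
    have hpair : #({a.1, a.2} : Finset α) ≤ 2 := card_le_two
    calc _ ≤ #(s.diag ∪ ({a.1, a.2} ×ˢ s ∪ s ×ˢ {a.1, a.2})) := card_le_card hsub
      _ ≤ #s + (2 * #s + #s * 2) := by
        refine (card_union_le _ _).trans
          (add_le_add (diag_card s).le ((card_union_le _ _).trans ?_))
        rw [card_product, card_product]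
        gcongr
      _ = 5 * #s := by ring
  calc _ ≤ ∑ _a ∈ s ×ˢ s, 5 * #s := sum_le_sum fun a _ => hcard a
    _ = 5 * #s ^ 3 := by rw [sum_const, card_product, smul_eq_mul]; ring

section IID

variable {Ω X : Type*} [MeasurableSpace Ω] [MeasurableSpace X] {μ : Measure Ω}
  [IsProbabilityMeasure μ] {P : Measure X} {Xs : ℕ → Ω → X}

theorem map_prodMk_eq_prod (hmeas : ∀ i, Measurable (Xs i)) (hlaw : ∀ i, μ.map (Xs i) = P)
    (hindep : iIndepFun Xs μ) {i j : ℕ} (hij : i ≠ j) :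
    μ.map (fun ω => (Xs i ω, Xs j ω)) = P.prod P := by
  rw [(indepFun_iff_map_prod_eq_prod_map_map (hmeas i).aemeasurable
    (hmeas j).aemeasurable).1 (hindep.indepFun hij), hlaw i, hlaw j]

theorem integral_comp_prodMk_eq (hmeas : ∀ i, Measurable (Xs i)) (hlaw : ∀ i, μ.map (Xs i) = P)
    (hindep : iIndepFun Xs μ) {f : X × X → ℝ} (hf : AEStronglyMeasurable f (P.prod P))
    {i j : ℕ} (hij : i ≠ j) :
    ∫ ω, f (Xs i ω, Xs j ω) ∂μ = ∫ p, f p ∂(P.prod P) := by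
  rw [← map_prodMk_eq_prod hmeas hlaw hindep hij] at hf ⊢
  exact (integral_map ((hmeas i).prodMk (hmeas j)).aemeasurable hf).symm

theorem integral_mul_centered_comp_prodMk_eq_zero (hmeas : ∀ i, Measurable (Xs i))
    (hlaw : ∀ i, μ.map (Xs i) = P) (hindep : iIndepFun Xs μ) {f : X × X → ℝ}
    (hf : Measurable f) (hfi : Integrable f (P.prod P)) {i j k l : ℕ} (hkl : k ≠ l)
    (hik : i ≠ k) (hil : i ≠ l) (hjk : j ≠ k) (hjl : j ≠ l) :
    ∫ ω, (f (Xs i ω, Xs j ω) - ∫ p, f p ∂(P.prod P)) *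
      (f (Xs k ω, Xs l ω) - ∫ p, f p ∂(P.prod P)) ∂μ = 0 := by
  set m := ∫ p, f p ∂(P.prod P)
  have hg (i j : ℕ) : Measurable fun ω => f (Xs i ω, Xs j ω) - m := by fun_prop
  have hindep' : (fun ω => f (Xs i ω, Xs j ω) - m) ⟂ᵢ[μ] (fun ω => f (Xs k ω, Xs l ω) - m) :=
    (hindep.indepFun_prodMk_prodMk hmeas i j k l hik hil hjk hjl).comp
      (hf.sub_const m) (hf.sub_const m)
  have hint : Integrable (fun ω => f (Xs k ω, Xs l ω)) μ := by
    rw [← map_prodMk_eq_prod hmeas hlaw hindep hkl] at hfi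
    exact hfi.comp_measurable ((hmeas k).prodMk (hmeas l))
  rw [hindep'.integral_fun_mul_eq_mul_integral (hg i j).aestronglyMeasurable
    (hg k l).aestronglyMeasurable, integral_sub hint (integrable_const m),
    integral_comp_prodMk_eq hmeas hlaw hindep hfi.1 hkl]
  simp [m]

theorem integral_sq_sum_sub_integral_le [IsProbabilityMeasure P] (hmeas : ∀ i, Measurable (Xs i))
    (hlaw : ∀ i, μ.map (Xs i) = P) (hindep : iIndepFun Xs μ) {f : X × X → ℝ}
    (hf : Measurable f) {C : ℝ} (hfC : ∀ p, |f p| ≤ C) (n : ℕ) :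
    ∫ ω, (∑ i ∈ range n, ∑ j ∈ range n, (f (Xs i ω, Xs j ω) - ∫ p, f p ∂(P.prod P))) ^ 2 ∂μ ≤
      20 * C ^ 2 * n ^ 3 := by
  set m := ∫ p, f p ∂(P.prod P)
  have hfi : Integrable f (P.prod P) :=
    .of_bound hf.aestronglyMeasurable C (ae_of_all _ fun p => by simpa using hfC p)
  have hm : |m| ≤ C := by
    simpa using norm_integral_le_of_norm_le_const (μ := P.prod P) (f := f)
      (ae_of_all _ fun p => (Real.norm_eq_abs _).trans_le (hfC p))
  have hYm (a : ℕ × ℕ) : Measurable fun ω => f (Xs a.1 ω, Xs a.2 ω) - m := by fun_prop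
  have hY (a : ℕ × ℕ) (ω : Ω) : |f (Xs a.1 ω, Xs a.2 ω) - m| ≤ 2 * C :=
    (abs_sub _ _).trans (by linarith [hfC (Xs a.1 ω, Xs a.2 ω)])
  have horth (a b : ℕ × ℕ)
      (hab : ¬(b.1 = b.2 ∨ b.1 = a.1 ∨ b.1 = a.2 ∨ b.2 = a.1 ∨ b.2 = a.2)) :
      ∫ ω, (f (Xs a.1 ω, Xs a.2 ω) - m) * (f (Xs b.1 ω, Xs b.2 ω) - m) ∂μ = 0 := by
    push Not at hab
    obtain ⟨hkl, hki, hkj, hli, hlj⟩ := hab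
    exact integral_mul_centered_comp_prodMk_eq_zero hmeas hlaw hindep hf hfi hkl
      hki.symm hli.symm hkj.symm hlj.symm
  calc _ = ∫ ω, (∑ a ∈ range n ×ˢ range n, (f (Xs a.1 ω, Xs a.2 ω) - m)) ^ 2 ∂μ := by
        simp only [sum_product]
    _ ≤ (2 * C) ^ 2 * (∑ a ∈ range n ×ˢ range n, #{b ∈ range n ×ˢ range n |
          b.1 = b.2 ∨ b.1 = a.1 ∨ b.1 = a.2 ∨ b.2 = a.1 ∨ b.2 = a.2} : ℕ) :=
        integral_sq_sum_le_of_integral_mul_eq_zero _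
          (fun a => (hYm a).aestronglyMeasurable)
          hY (fun a b => b.1 = b.2 ∨ b.1 = a.1 ∨ b.1 = a.2 ∨ b.2 = a.1 ∨ b.2 = a.2) horth
    _ ≤ (2 * C) ^ 2 * (5 * #(range n) ^ 3 : ℕ) := by
        gcongr
        exact sum_card_filter_pair_meets_le _
    _ = 20 * C ^ 2 * n ^ 3 := by push_cast [card_range]; ring

theorem measure_lt_abs_sum_sub_integral_le [IsProbabilityMeasure P]
    (hmeas : ∀ i, Measurable (Xs i)) (hlaw : ∀ i, μ.map (Xs i) = P) (hindep : iIndepFun Xs μ)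
    {f : X × X → ℝ} (hf : Measurable f) {C : ℝ} (hfC : ∀ p, |f p| ≤ C) (n : ℕ) {c : ℝ}
    (hc : 0 < c) :
    μ {ω | c < |∑ i ∈ range n, ∑ j ∈ range n, (f (Xs i ω, Xs j ω) - ∫ p, f p ∂(P.prod P))|} ≤
      ENNReal.ofReal (20 * C ^ 2 * n ^ 3 / c ^ 2) := by
  have hT : MemLp (fun ω => ∑ i ∈ range n, ∑ j ∈ range n,
      (f (Xs i ω, Xs j ω) - ∫ p, f p ∂(P.prod P))) 2 μ :=
    memLp_finsetSum _ fun i _ => memLp_finsetSum _ fun j _ =>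
      (MemLp.of_bound (by fun_prop : Measurable fun ω => f (Xs i ω, Xs j ω)).aestronglyMeasurable
        C (ae_of_all _ fun ω => by simpa using hfC _)).sub (memLp_const _)
  refine (measure_lt_abs_le_integral_sq_div hT hc).trans (ENNReal.ofReal_le_ofReal ?_)
  gcongr
  exact integral_sq_sum_sub_integral_le hmeas hlaw hindep hf hfC n

end IID

theorem sample_msDepth_rootn_consistent_general {X : Type*} [MetricSpace X]
    [SecondCountableTopology X] [MeasurableSpace X] [BorelSpace X]
    {Ω : Type*} [MeasureSpace Ω] [IsProbabilityMeasure (ℙ : Measure Ω)]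
    (P : Measure X) [IsProbabilityMeasure P] (μ : X)
    (Xs : ℕ → Ω → X) (hmeas : ∀ i, Measurable (Xs i))
    (hlaw : ∀ i, Measure.map (Xs i) ℙ = P)
    (hindep : ProbabilityTheory.iIndepFun Xs ℙ) :
    ∀ ε > (0 : ℝ), ∃ M > (0 : ℝ), ∀ n : ℕ, 1 ≤ n →
      ℙ {ω : Ω |
          |(1 - (1 / (2 * (n : ℝ) ^ 2)) * ∑ i ∈ Finset.range n, ∑ j ∈ Finset.range n,
              mh (Xs i ω) (Xs j ω) μ) - msDepth μ P| > M / Real.sqrt n}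
        ≤ ENNReal.ofReal ε := by
  intro ε hε
  refine ⟨√(20 / ε), by positivity, fun n hn => ?_⟩
  have hn₀ : n ≠ 0 := Nat.one_le_iff_ne_zero.mp hn
  have hn_pos : (0 : ℝ) < n := Nat.cast_pos.mpr hn
  have hc : 0 < 2 * (n : ℝ) ^ 2 * (√(20 / ε) / √n) := by positivity
  refine (measure_mono fun ω hω => ?_).trans ((measure_lt_abs_sum_sub_integral_le hmeas hlaw
    hindep (measurable_mh μ) (fun p => abs_mh_le_two p.1 p.2 μ) n hc).trans
    (ENNReal.ofReal_le_ofReal (le_of_eq ?_)))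
  · have hdev : |sampleMsDepth μ (Xs · ω) n - msDepth μ P| > √(20 / ε) / √n := hω
    rwa [sampleMsDepth_sub_msDepth _ _ P hn₀, abs_div, abs_neg,
      abs_of_pos (a := 2 * (n : ℝ) ^ 2) (by positivity), gt_iff_lt,
      lt_div_iff₀ (by positivity), mul_comm] at hdev
  · rw [mul_pow, div_pow, Real.sq_sqrt (by positivity), Real.sq_sqrt hn_pos.le]
    field_simp

theorem sample_msDepth_rootn_consistent {X : Type*} [MetricSpace X] [CompleteSpace X]
    [SecondCountableTopology X] [MeasurableSpace X] [BorelSpace X]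
    {Ω : Type*} [MeasureSpace Ω] [IsProbabilityMeasure (ℙ : Measure Ω)]
    (P : Measure X) [IsProbabilityMeasure P] (μ : X)
    (Xs : ℕ → Ω → X) (hmeas : ∀ i, Measurable (Xs i))
    (hlaw : ∀ i, Measure.map (Xs i) ℙ = P)
    (hindep : ProbabilityTheory.iIndepFun Xs ℙ) :
    ∀ ε > (0 : ℝ), ∃ M > (0 : ℝ), ∀ n : ℕ, 1 ≤ n →
      ℙ {ω : Ω |
          |(1 - (1 / (2 * (n : ℝ) ^ 2)) * ∑ i ∈ Finset.range n, ∑ j ∈ Finset.range n,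
              mh (Xs i ω) (Xs j ω) μ) - msDepth μ P| > M / Real.sqrt n}
        ≤ ENNReal.ofReal ε :=
  sample_msDepth_rootn_consistent_general P μ Xs hmeas hlaw hindep
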